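/- arXiv:1609.04960 — 3 statements merged into one kernel-verified Lean document; each statement's English description precedes it below -/
import Mathlib

section
/- Let Γ(N, L^M) be a simple game with maximal losing coalitions L^M, and let C ⊆ 2^N be a collection of coalitions such that every x ∈ L^M has Hamming distance at most 1 from some c ∈ C. Then the dimension of Γ(N, L^M) is at most |C|. -/
/-!
For `c ∈ C` let `L_c` be the members of `L` within Hamming distance `1` of `c`; since `C` covers
`L`, the game is the intersection of the games with maximal losing coalitions `L_c`, so it
suffices that each of these is weighted. An antichain inside the radius-one ball around `c`
either has a member strictly below `c`, and then consists of sets `c \ {j}` for `j` in some `B`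
(weights `1` on `B`, `0` on `c \ B`, `#B` outside `c`, quota `#B`), or all its members contain
`c`, and then it consists of `c` or of sets `c ∪ {i}` for `i` in some `A` (weights `0` on `c`,
`1` on `A`, `2` elsewhere, quota `2`).
-/

open Finset

/-- Winning predicate of the simple game determined by a collection `L` of
(maximal) losing coalitions: `S` loses iff `S ⊆ y` for some `y ∈ L`. -/
def wins {n : ℕ} (L : Finset (Finset (Fin n))) (S : Finset (Fin n)) : Prop :=
  ∀ y ∈ L, ¬ S ⊆ y

/-- A winning predicate is weighted with quota `q` and nonnegative weights `w`. -/
def IsWeightedRepr {n : ℕ} (win : Finset (Fin n) → Prop) (q : ℝ) (w : Fin n → ℝ) : Prop :=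
  0 ≤ q ∧ (∀ i, 0 ≤ w i) ∧ ∀ S : Finset (Fin n), win S ↔ q ≤ ∑ i ∈ S, w i

/-- A winning predicate is weighted. -/
def IsWeighted {n : ℕ} (win : Finset (Fin n) → Prop) : Prop :=
  ∃ q w, IsWeightedRepr win q w

/-- Hamming distance between coalitions. -/
def hdist {n : ℕ} (x y : Finset (Fin n)) : ℕ := (x \ y).card + (y \ x).card

/-- The dimension of a game given by its winning predicate: the least `d` such that
the game is the intersection of `d` weighted games. -/
noncomputable def gameDim {n : ℕ} (win : Finset (Fin n) → Prop) : ℕ :=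
  sInf {d | ∃ W : Fin d → (Finset (Fin n) → Prop),
    (∀ i, IsWeighted (W i)) ∧ ∀ S, win S ↔ ∀ i, W i S}

/-- A simple game on `n` players. -/
structure SimpleGame (n : ℕ) where
  win : Finset (Fin n) → Prop
  mono : ∀ S T : Finset (Fin n), S ⊆ T → win S → win T
  empty_not_win : ¬ win ∅
  univ_win : win Finset.univ

/-- The maximal losing coalitions of a simple game. -/
def maxLosing {n : ℕ} (G : SimpleGame n) : Set (Finset (Fin n)) :=
  {T | ¬ G.win T ∧ ∀ T' : Finset (Fin n), T ⊂ T' → G.win T'}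

/-- `C` is a binary covering code of length `n` with covering radius `1`. -/
def IsCoveringCode {n : ℕ} (C : Finset (Finset (Fin n))) : Prop :=
  ∀ x : Finset (Fin n), ∃ c ∈ C, hdist x c ≤ 1

/-- `K n`: the minimum size of a binary covering code of length `n`, radius `1`. -/
noncomputable def K (n : ℕ) : ℕ :=
  sInf {k | ∃ C : Finset (Finset (Fin n)), IsCoveringCode C ∧ C.card = k}

lemma hdist_le_one_cases {n : ℕ} {y c : Finset (Fin n)} (h : hdist y c ≤ 1) :
    y = c ∨ (∃ i ∉ c, y = insert i c) ∨ ∃ j ∈ c, y = c.erase j := by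
  unfold hdist at h
  rcases Nat.le_one_iff_eq_zero_or_eq_one.mp (le_of_add_le_left h) with hyc | hyc
  · have hsub : y ⊆ c := sdiff_eq_empty_iff_subset.mp (card_eq_zero.mp hyc)
    rcases Nat.le_one_iff_eq_zero_or_eq_one.mp (le_of_add_le_right h) with hcy | hcy
    · exact .inl (hsub.antisymm (sdiff_eq_empty_iff_subset.mp (card_eq_zero.mp hcy)))
    · obtain ⟨j, hj⟩ := card_eq_one.mp hcy
      have hjc : j ∈ c \ y := hj ▸ mem_singleton_self j
      refine .inr (.inr ⟨j, (mem_sdiff.mp hjc).1, ?_⟩)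
      rw [← sdiff_singleton_eq_erase, ← hj, Finset.sdiff_sdiff_eq_self hsub]
  · have hsup : c ⊆ y := sdiff_eq_empty_iff_subset.mp (card_eq_zero.mp (by omega))
    obtain ⟨i, hi⟩ := card_eq_one.mp hyc
    have hiy : i ∈ y \ c := hi ▸ mem_singleton_self i
    refine .inr (.inl ⟨i, (mem_sdiff.mp hiy).2, ?_⟩)
    rw [insert_eq, ← hi, sdiff_union_of_subset hsup]

lemma isWeighted_of_nat_weights {n : ℕ} {win : Finset (Fin n) → Prop} (q : ℕ) (w : Fin n → ℕ)
    (h : ∀ S, win S ↔ q ≤ ∑ i ∈ S, w i) : IsWeighted win := by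
  refine ⟨q, fun i => w i, q.cast_nonneg, fun i => (w i).cast_nonneg, fun S => ?_⟩
  rw [h S, ← Nat.cast_sum, Nat.cast_le]

lemma wins_image_erase_iff {n : ℕ} {B c S : Finset (Fin n)} :
    wins (B.image c.erase) S ↔ (S ⊆ c → B ⊆ S) := by
  simp only [wins, forall_mem_image, subset_erase, not_and, not_not]
  exact ⟨fun h hS j hj => h hj hS, fun h j hj hS => h hS hj⟩

lemma isWeighted_wins_image_erase {n : ℕ} (B c : Finset (Fin n)) :
    IsWeighted (wins (B.image c.erase)) := by
  refine isWeighted_of_nat_weights #B (fun i => if i ∈ c then if i ∈ B then 1 else 0 else #B)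
    fun S => wins_image_erase_iff.trans ?_
  by_cases hSc : S ⊆ c
  · have hsum : ∑ i ∈ S, (if i ∈ c then if i ∈ B then 1 else 0 else #B) = #(S ∩ B) := by
      rw [sum_congr rfl fun i hi => if_pos (hSc hi), sum_boole, filter_mem_eq_inter]
      rfl
    rw [hsum, imp_iff_right hSc, ← inter_eq_right]
    exact ⟨fun h => (congrArg card h).ge,
      fun h => eq_of_subset_of_card_le inter_subset_right h⟩
  · obtain ⟨i, hiS, hic⟩ := not_subset.mp hSc
    simp only [hSc, false_imp_iff, true_iff]
    simpa [hic] using single_le_sum (f := fun i => if i ∈ c then if i ∈ B then 1 else 0 else #B)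
      (fun _ _ => Nat.zero_le _) hiS

lemma wins_insert_image_insert_iff {n : ℕ} {A c S : Finset (Fin n)} :
    wins (insert c (A.image (insert · c))) S ↔ (S \ c).Nonempty ∧ ∀ i ∈ A, S \ c ≠ {i} := by
  have hsub : ∀ i, S ⊆ insert i c ↔ S \ c ⊆ {i} := fun i => by
    rw [insert_eq]
    exact sdiff_le_iff'.symm
  simp only [wins, forall_mem_insert, forall_mem_image, hsub, subset_singleton_iff]
  rw [← sdiff_eq_empty_iff_subset, nonempty_iff_ne_empty]
  exact ⟨fun h => ⟨h.1, fun i hi => (not_or.mp (h.2 hi)).2⟩,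
    fun h => ⟨h.1, fun i hi => not_or.mpr ⟨h.1, h.2 i hi⟩⟩⟩

lemma isWeighted_wins_insert_image_insert {n : ℕ} (A c : Finset (Fin n)) :
    IsWeighted (wins (insert c (A.image (insert · c)))) := by
  set w : Fin n → ℕ := fun i => if i ∈ c then 0 else if i ∈ A then 1 else 2
  refine isWeighted_of_nat_weights 2 w fun S => wins_insert_image_insert_iff.trans ?_
  have hsum : ∑ i ∈ S, w i = ∑ i ∈ S \ c, w i :=
    (sum_subset sdiff_subset fun i _ hi => by simp_all [w]).symm
  rw [hsum]
  rcases (S \ c).eq_empty_or_nonempty with hT | hT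
  · simp [hT]
  rcases hT.exists_eq_singleton_or_nontrivial with ⟨i, hi⟩ | hT'
  · have hic : i ∉ c := (mem_sdiff.mp (hi ▸ mem_singleton_self i)).2
    rw [hi]
    by_cases hiA : i ∈ A <;> simp [w, hic, hiA]
  · have hcard : #(S \ c) • 1 ≤ ∑ i ∈ S \ c, w i :=
      card_nsmul_le_sum _ _ _ fun i hi => by simp [w, (mem_sdiff.mp hi).2]; split <;> omega
    have := one_lt_card_iff_nontrivial.mpr hT'
    simp only [smul_eq_mul, mul_one] at hcard
    exact iff_of_true ⟨hT, fun i _ => hT'.ne_singleton⟩ (by omega)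

lemma wins_insert_of_subset {n : ℕ} {L : Finset (Finset (Fin n))} {y z : Finset (Fin n)}
    (hz : z ∈ L) (hyz : y ⊆ z) : wins (insert y L) = wins L := by
  ext S
  simp only [wins, forall_mem_insert, and_iff_right_iff_imp]
  exact fun h hS => h z hz (hS.trans hyz)

lemma eq_image_erase_of_hdist_le_one {n : ℕ} {L : Finset (Finset (Fin n))}
    {c y₁ : Finset (Fin n)} (hanti : IsAntichain (· ⊆ ·) (L : Set (Finset (Fin n))))
    (hball : ∀ y ∈ L, hdist y c ≤ 1) (hy₁ : y₁ ∈ L) (hy₁c : y₁ ⊂ c) :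
    L = (c.filter (c.erase · ∈ L)).image c.erase := by
  ext y
  refine ⟨fun hy => ?_, fun hy => ?_⟩
  · have hcy : ¬ c ⊆ y := fun hcy =>
      have hy₁y := hy₁c.trans_subset hcy
      hanti hy₁ hy hy₁y.ne hy₁y.subset
    rcases hdist_le_one_cases (hball y hy) with rfl | ⟨i, -, rfl⟩ | ⟨j, hj, rfl⟩
    · exact absurd Subset.rfl hcy
    · exact absurd (subset_insert i c) hcy
    · exact mem_image_of_mem _ (mem_filter.mpr ⟨hj, hy⟩)
  · obtain ⟨j, hj, rfl⟩ := mem_image.mp hy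
    exact (mem_filter.mp hj).2

lemma subset_of_hdist_le_one_of_not_ssubset {n : ℕ} {y c : Finset (Fin n)}
    (h : hdist y c ≤ 1) (hyc : ¬ y ⊂ c) : c ⊆ y := by
  rcases hdist_le_one_cases h with rfl | ⟨i, -, rfl⟩ | ⟨j, hj, rfl⟩
  · exact Subset.rfl
  · exact subset_insert i c
  · exact absurd (erase_ssubset hj) hyc

lemma insert_eq_insert_image_insert_of_hdist_le_one {n : ℕ} {L : Finset (Finset (Fin n))}
    {c : Finset (Fin n)} (hball : ∀ y ∈ L, hdist y c ≤ 1) (hbelow : ∀ y ∈ L, ¬ y ⊂ c) :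
    insert c L = insert c ((univ.filter (insert · c ∈ L)).image (insert · c)) := by
  ext y
  simp only [mem_insert, mem_image, mem_filter, mem_univ, true_and]
  refine ⟨fun hy => ?_, fun hy => ?_⟩
  · rcases hy with rfl | hy
    · exact .inl rfl
    rcases hdist_le_one_cases (hball y hy) with rfl | ⟨i, -, rfl⟩ | ⟨j, hj, rfl⟩
    · exact .inl rfl
    · exact .inr ⟨i, hy, rfl⟩
    · exact absurd (erase_ssubset hj) (hbelow _ hy)
  · rcases hy with rfl | ⟨i, hi, rfl⟩
    · exact .inl rfl
    · exact .inr hi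

lemma isWeighted_wins_of_hdist_le_one {n : ℕ} {L : Finset (Finset (Fin n))} {c : Finset (Fin n)}
    (hanti : IsAntichain (· ⊆ ·) (L : Set (Finset (Fin n))))
    (hball : ∀ y ∈ L, hdist y c ≤ 1) : IsWeighted (wins L) := by
  by_cases hbelow : ∃ y₁ ∈ L, y₁ ⊂ c
  · obtain ⟨y₁, hy₁, hy₁c⟩ := hbelow
    rw [eq_image_erase_of_hdist_le_one hanti hball hy₁ hy₁c]
    exact isWeighted_wins_image_erase _ _
  push Not at hbelow
  rcases L.eq_empty_or_nonempty with rfl | ⟨y₀, hy₀⟩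
  · simpa using isWeighted_wins_image_erase ∅ c
  have hcy₀ := subset_of_hdist_le_one_of_not_ssubset (hball y₀ hy₀) (hbelow y₀ hy₀)
  rw [← wins_insert_of_subset hy₀ hcy₀, insert_eq_insert_image_insert_of_hdist_le_one hball hbelow]
  exact isWeighted_wins_insert_image_insert _ _

lemma wins_iff_forall_wins_filter {n : ℕ} {ι : Type*} {L : Finset (Finset (Fin n))}
    (s : Finset ι) (p : Finset (Fin n) → ι → Prop) [∀ y i, Decidable (p y i)]
    (hcover : ∀ y ∈ L, ∃ i ∈ s, p y i) (S : Finset (Fin n)) :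
    wins L S ↔ ∀ i ∈ s, wins (L.filter (p · i)) S := by
  refine ⟨fun h i _ y hy => h y (mem_filter.mp hy).1, fun h y hy hSy => ?_⟩
  obtain ⟨i, hi, hyi⟩ := hcover y hy
  exact h i hi y (mem_filter.mpr ⟨hy, hyi⟩) hSy

lemma gameDim_le_card {n : ℕ} {ι : Type*} {win : Finset (Fin n) → Prop} (s : Finset ι)
    (W : ι → Finset (Fin n) → Prop) (hW : ∀ i ∈ s, IsWeighted (W i))
    (h : ∀ S, win S ↔ ∀ i ∈ s, W i S) : gameDim win ≤ #s := by
  refine Nat.sInf_le ⟨fun k => W (s.equivFin.symm k), fun k => hW _ (s.equivFin.symm k).2,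
    fun S => (h S).trans ⟨fun hS k => hS _ (s.equivFin.symm k).2, fun hS i hi => ?_⟩⟩
  simpa using hS (s.equivFin ⟨i, hi⟩)

theorem stmt5 {n : ℕ} (L : Finset (Finset (Fin n)))
    (hanti : IsAntichain (· ⊆ ·) (L : Set (Finset (Fin n))))
    (C : Finset (Finset (Fin n)))
    (hC : ∀ x ∈ L, ∃ c ∈ C, hdist x c ≤ 1) :
    gameDim (wins L) ≤ C.card :=
  gameDim_le_card C (fun c => wins (L.filter (hdist · c ≤ 1)))
    (fun _ _ => isWeighted_wins_of_hdist_le_one (hanti.subset (coe_subset.mpr (filter_subset _ _)))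
      fun _ hy => (mem_filter.mp hy).2)
    (wins_iff_forall_wins_filter C _ hC)
end

section
/- Let x, y ⊆ N be two incomparable coalitions with Hamming distance exactly 2 (so |x \ y| = |y \ x| = 1). Then the simple game Γ(N, {x, y}) (where S loses iff S ⊆ x or S ⊆ y) is weighted. -/
open Finset

/-! Give player `i` the weight `[i ∉ x] + [i ∉ y]`, so that a coalition `S` weighs
`|S \ x| + |S \ y|`. A winning coalition leaves both `x` and `y`, hence weighs at least `2`;
a losing one lies in `x` (say), hence weighs at most `|x \ y| ≤ 1`. Quota `2` works. -/

variable {n : ℕ}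

theorem wins_pair_iff (x y S : Finset (Fin n)) :
    wins ({x, y} : Finset (Finset (Fin n))) S ↔ ¬ S ⊆ x ∧ ¬ S ⊆ y := by
  simp [wins]

theorem sum_ite_notMem_eq_card_sdiff (S x : Finset (Fin n)) :
    ∑ i ∈ S, (if i ∉ x then (1 : ℝ) else 0) = (S \ x).card := by
  rw [sum_boole, sdiff_eq_filter]

theorem card_sdiff_le_card_sdiff_of_subset {S x : Finset (Fin n)} (h : S ⊆ x)
    (y : Finset (Fin n)) : (S \ y).card ≤ (x \ y).card :=
  card_le_card (sdiff_subset_sdiff h le_rfl)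

theorem wins_pair_iff_two_le_card_sdiff_add {x y : Finset (Fin n)}
    (hxy : (x \ y).card ≤ 1) (hyx : (y \ x).card ≤ 1) (S : Finset (Fin n)) :
    wins ({x, y} : Finset (Finset (Fin n))) S ↔ 2 ≤ (S \ x).card + (S \ y).card := by
  rw [wins_pair_iff, ← sdiff_nonempty, ← sdiff_nonempty, ← card_pos, ← card_pos]
  constructor
  · omega
  · intro h
    have subset_of_card_eq_zero (z : Finset (Fin n)) (h0 : (S \ z).card = 0) : S ⊆ z :=
      sdiff_eq_empty_iff_subset.mp (card_eq_zero.mp h0)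
    refine ⟨Nat.pos_of_ne_zero fun h0 => ?_, Nat.pos_of_ne_zero fun h0 => ?_⟩
    · have := card_sdiff_le_card_sdiff_of_subset (subset_of_card_eq_zero x h0) y
      omega
    · have := card_sdiff_le_card_sdiff_of_subset (subset_of_card_eq_zero y h0) x
      omega

theorem isWeightedRepr_wins_pair {x y : Finset (Fin n)}
    (hxy : (x \ y).card ≤ 1) (hyx : (y \ x).card ≤ 1) :
    IsWeightedRepr (wins ({x, y} : Finset (Finset (Fin n)))) 2
      (fun i => (if i ∉ x then 1 else 0) + (if i ∉ y then 1 else 0)) := by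
  refine ⟨zero_le_two, fun i => by positivity, fun S => ?_⟩
  rw [wins_pair_iff_two_le_card_sdiff_add hxy hyx, sum_add_distrib,
    sum_ite_notMem_eq_card_sdiff, sum_ite_notMem_eq_card_sdiff]
  exact_mod_cast Iff.rfl

theorem stmt13 {n : ℕ} (x y : Finset (Fin n))
    (hxy : (x \ y).card = 1) (hyx : (y \ x).card = 1) :
    IsWeighted (wins ({x, y} : Finset (Finset (Fin n)))) :=
  ⟨2, _, isWeightedRepr_wins_pair hxy.le hyx.le⟩
end

section
/- If the collection L^M of maximal losing coalitions of a simple game Γ(N, L^M) contains two distinct coalitions at Hamming distance at most 3 (i.e., L^M is not a code with minimum distance 4), then the dimension of Γ(N, L^M) is strictly less than |L^M|. -/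
open Finset

/-!
Two maximal losing coalitions `x ≠ y` at Hamming distance at most `3` satisfy `|x \ y| ≤ 1` or
`|y \ x| ≤ 1`, and then the game whose losing coalitions are the subsets of `x` or of `y` is
weighted. Replacing the two one-coalition games `S ⊈ x` and `S ⊈ y` by this single weighted game
writes `Γ(N, L^M)` as an intersection of `|L^M| - 1` weighted games.
-/

section

variable {n : ℕ}

theorem IsWeighted.of_nat {win : Finset (Fin n) → Prop} (q : ℕ) (w : Fin n → ℕ)
    (h : ∀ S, win S ↔ q ≤ ∑ i ∈ S, w i) : IsWeighted win := by
  refine ⟨q, fun i => w i, q.cast_nonneg, fun i => (w i).cast_nonneg, fun S => ?_⟩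
  rw [h, ← Nat.cast_sum, Nat.cast_le]

/-- With `k = |y \ x|`, the quota is `k + 1`; the weights are `k` on `x \ y`, `1` on `y \ x`,
`0` on `x ∩ y` and `k + 1` outside `x ∪ y`. -/
theorem isWeighted_not_subset_and_not_subset {x y : Finset (Fin n)} (hxy : (x \ y).card ≤ 1) :
    IsWeighted fun S => ¬ S ⊆ x ∧ ¬ S ⊆ y := by
  set k := (y \ x).card
  let w : Fin n → ℕ := fun i =>
    if i ∈ y then (if i ∈ x then 0 else 1) else if i ∈ x then k else k + 1
  have sum_x : ∑ i ∈ x, w i ≤ k := by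
    rw [← sum_inter_add_sum_sdiff x y, sum_eq_zero fun i hi => by
        simp [w, mem_of_mem_inter_left hi, mem_of_mem_inter_right hi],
      sum_congr rfl fun i hi => show w i = k by simp [w, (mem_sdiff.1 hi).1, (mem_sdiff.1 hi).2],
      sum_const, smul_eq_mul, zero_add]
    simpa using Nat.mul_le_mul_right k hxy
  have sum_y : ∑ i ∈ y, w i = k := by
    rw [← sum_inter_add_sum_sdiff y x, sum_eq_zero fun i hi => by
        simp [w, mem_of_mem_inter_left hi, mem_of_mem_inter_right hi],
      sum_congr rfl fun i hi => show w i = 1 by simp [w, (mem_sdiff.1 hi).1, (mem_sdiff.1 hi).2],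
      sum_const, smul_eq_mul, mul_one, zero_add]
  refine IsWeighted.of_nat (k + 1) w fun S => ⟨?_, ?_⟩
  · rintro ⟨hSx, hSy⟩
    by_cases hS : S ⊆ x ∪ y
    · obtain ⟨b, hbS, hbx⟩ := not_subset.1 hSx
      obtain ⟨a, haS, hay⟩ := not_subset.1 hSy
      have hby : b ∈ y := (mem_union.1 (hS hbS)).resolve_left hbx
      have hax : a ∈ x := (mem_union.1 (hS haS)).resolve_right hay
      have hab : a ≠ b := by rintro rfl; exact hbx hax
      calc k + 1 = w a + w b := by simp [w, hax, hay, hbx, hby, add_comm]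
        _ = ∑ i ∈ {a, b}, w i := (sum_pair hab).symm
        _ ≤ ∑ i ∈ S, w i :=
          sum_le_sum_of_subset (insert_subset haS (singleton_subset_iff.2 hbS))
    · obtain ⟨i, hiS, hi⟩ := not_subset.1 hS
      rw [mem_union, not_or] at hi
      calc k + 1 = w i := by simp [w, hi.1, hi.2]
        _ ≤ ∑ j ∈ S, w j := single_le_sum (fun _ _ => Nat.zero_le _) hiS
  · intro hquota
    constructor <;> intro hsub
    · have := sum_le_sum_of_subset (f := w) hsub; omega
    · have := sum_le_sum_of_subset (f := w) hsub; omega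

theorem isWeighted_not_subset (z : Finset (Fin n)) : IsWeighted fun S => ¬ S ⊆ z := by
  simpa using isWeighted_not_subset_and_not_subset (x := z) (y := z) (by simp)

theorem gameDim_le {win : Finset (Fin n) → Prop} {d : ℕ} (W : Fin d → Finset (Fin n) → Prop)
    (hW : ∀ i, IsWeighted (W i)) (h : ∀ S, win S ↔ ∀ i, W i S) : gameDim win ≤ d :=
  Nat.sInf_le ⟨W, hW, h⟩

theorem gameDim_and_wins_le {P : Finset (Fin n) → Prop} (hP : IsWeighted P)
    (L : Finset (Finset (Fin n))) : gameDim (fun S => P S ∧ wins L S) ≤ L.card + 1 := by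
  refine gameDim_le (Fin.cons (α := fun _ => Finset (Fin n) → Prop) P
    fun j S => ¬ S ⊆ L.equivFin.symm j) (Fin.cases hP fun _ => isWeighted_not_subset _)
    fun S => ?_
  simp only [Fin.forall_fin_succ, Fin.cons_zero, Fin.cons_succ, wins,
    ← L.equivFin.forall_congr_left (p := fun z : L => ¬ S ⊆ z), Subtype.forall]

theorem wins_iff_of_mem {L : Finset (Finset (Fin n))} {x y : Finset (Fin n)} (hx : x ∈ L)
    (hy : y ∈ L) (hne : x ≠ y) (S : Finset (Fin n)) :
    wins L S ↔ (¬ S ⊆ x ∧ ¬ S ⊆ y) ∧ wins ((L.erase x).erase y) S := by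
  conv_lhs => rw [← insert_erase hx, ← insert_erase (mem_erase.2 ⟨hne.symm, hy⟩)]
  simp only [wins, forall_mem_insert, and_assoc]

theorem gameDim_wins_lt_card {L : Finset (Finset (Fin n))} {x y : Finset (Fin n)} (hx : x ∈ L)
    (hy : y ∈ L) (hne : x ≠ y) (hxy : IsWeighted fun S => ¬ S ⊆ x ∧ ¬ S ⊆ y) :
    gameDim (wins L) < L.card := by
  set L' := (L.erase x).erase y
  have hcard : L'.card + 2 = L.card := by
    rw [card_erase_of_mem (mem_erase.2 ⟨hne.symm, hy⟩), card_erase_of_mem hx]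
    have := one_lt_card.2 ⟨x, hx, y, hy, hne⟩
    omega
  calc gameDim (wins L) = gameDim fun S => (¬ S ⊆ x ∧ ¬ S ⊆ y) ∧ wins L' S :=
        congrArg gameDim (funext fun S => propext (wins_iff_of_mem hx hy hne S))
    _ ≤ L'.card + 1 := gameDim_and_wins_le hxy L'
    _ < L.card := by omega

end

theorem stmt15_general {n : ℕ} (L : Finset (Finset (Fin n)))
    (x y : Finset (Fin n)) (hx : x ∈ L) (hy : y ∈ L) (hne : x ≠ y)
    (hd : hdist x y ≤ 3) :
    gameDim (wins L) < L.card := by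
  have : (x \ y).card ≤ 1 ∨ (y \ x).card ≤ 1 := by unfold hdist at hd; omega
  rcases this with hxy | hyx
  · exact gameDim_wins_lt_card hx hy hne (isWeighted_not_subset_and_not_subset hxy)
  · exact gameDim_wins_lt_card hy hx hne.symm (isWeighted_not_subset_and_not_subset hyx)

theorem stmt15 {n : ℕ} (L : Finset (Finset (Fin n)))
    (hanti : IsAntichain (· ⊆ ·) (L : Set (Finset (Fin n))))
    (x y : Finset (Fin n)) (hx : x ∈ L) (hy : y ∈ L) (hne : x ≠ y)
    (hd : hdist x y ≤ 3) :
    gameDim (wins L) < L.card :=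
  stmt15_general L x y hx hy hne hd
end
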